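/- Let V be a physical covariance matrix of a two-mode Gaussian state, let ν, μ be real numbers, and let S ∈ Sp(4,ℝ) satisfy S (Λ V Λ) Sᵀ = diag(ν, ν, μ, μ). Writing S in 2×2 blocks S = [[W_a, W_b],[W_c, W_d]], one has |det W_b − det W_a| ≤ ν. -/

import Mathlib

open Matrix
open scoped ComplexOrder

noncomputable section

/-- The 2×2 symplectic form `J = [[0,1],[-1,0]]`. -/
def J2 : Matrix (Fin 2) (Fin 2) ℝ := !![0, 1; -1, 0]

/-- `Z = diag(1,-1)`. -/
def Z2 : Matrix (Fin 2) (Fin 2) ℝ := !![1, 0; 0, -1]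

/-- The 4×4 symplectic form `Ω = diag(J, J)`. -/
def Ω4 : Matrix (Fin 2 ⊕ Fin 2) (Fin 2 ⊕ Fin 2) ℝ := fromBlocks J2 0 0 J2

/-- `V` is a physical covariance matrix of a two-mode Gaussian state: `V + iΩ` is
positive semidefinite. -/
def IsPhysCM (V : Matrix (Fin 2 ⊕ Fin 2) (Fin 2 ⊕ Fin 2) ℝ) : Prop :=
  (V.map Complex.ofReal + Complex.I • Ω4.map Complex.ofReal).PosSemidef

/-- Noise matrix `N(V) = Z A Z + Z C + Cᵀ Z + B` of a two-mode covariance matrix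
`V = [[A, C], [Cᵀ, B]]`. -/
def noiseN (V : Matrix (Fin 2 ⊕ Fin 2) (Fin 2 ⊕ Fin 2) ℝ) : Matrix (Fin 2) (Fin 2) ℝ :=
  Z2 * V.toBlocks₁₁ * Z2 + Z2 * V.toBlocks₁₂ + (V.toBlocks₁₂)ᵀ * Z2 + V.toBlocks₂₂

/-- Coherent-state teleportation fidelity `F(V) = 2 / √(det (2 I₂ + N(V)))`. -/
def fid (V : Matrix (Fin 2 ⊕ Fin 2) (Fin 2 ⊕ Fin 2) ℝ) : ℝ :=
  2 / Real.sqrt (((2 : ℝ) • (1 : Matrix (Fin 2) (Fin 2) ℝ) + noiseN V).det)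

/-- `Σ(V) = det A + det B - 2 det C`. -/
def SigmaPT (V : Matrix (Fin 2 ⊕ Fin 2) (Fin 2 ⊕ Fin 2) ℝ) : ℝ :=
  (V.toBlocks₁₁).det + (V.toBlocks₂₂).det - 2 * (V.toBlocks₁₂).det

/-- The lowest partially-transposed symplectic eigenvalue
`ν(V) = √((Σ − √(Σ² − 4 det V))/2)`. -/
def nuPT (V : Matrix (Fin 2 ⊕ Fin 2) (Fin 2 ⊕ Fin 2) ℝ) : ℝ :=
  Real.sqrt ((SigmaPT V - Real.sqrt ((SigmaPT V) ^ 2 - 4 * V.det)) / 2)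

/-- The partial transposition matrix `Λ = diag(1,-1,1,1)`. -/
def Λ4 : Matrix (Fin 2 ⊕ Fin 2) (Fin 2 ⊕ Fin 2) ℝ := fromBlocks Z2 0 0 1

/-!
Congruence by the real matrix `S Λ` keeps `V + iΩ` positive semidefinite and turns it into
`S (Λ V Λ) Sᵀ + i S (Λ Ω Λ) Sᵀ`. Since `Λ Ω Λ = diag(-J, J)` and `M J Mᵀ = (det M) J` for every
2×2 matrix `M`, the upper-left 2×2 block of this matrix is `ν I + i ε J` with
`ε = det W_b - det W_a`. This block is positive semidefinite, so `ν ≥ 0` and `ν² - ε² ≥ 0`.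
-/

open Complex

namespace Matrix

variable {l m n : Type*}

lemma map_ofReal_mul [Fintype n] (P : Matrix m n ℝ) (Q : Matrix n l ℝ) :
    (P * Q).map ofReal = P.map ofReal * Q.map ofReal :=
  Matrix.map_mul (f := ofRealHom)

def complexify (A B : Matrix n n ℝ) : Matrix n n ℂ := A.map ofReal + I • B.map ofReal

lemma PosSemidef.complexify_congr [Fintype n] [Fintype m] {A B : Matrix n n ℝ}
    (h : (complexify A B).PosSemidef) (T : Matrix m n ℝ) :
    (complexify (T * A * Tᵀ) (T * B * Tᵀ)).PosSemidef := by
  have hT : (T.map ofReal)ᴴ = Tᵀ.map ofReal := by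
    rw [← conjTranspose_map _ fun _ ↦ (conj_ofReal _).symm, conjTranspose_eq_transpose_of_trivial]
  have := h.mul_mul_conjTranspose_same (T.map ofReal)
  rw [hT, complexify, Matrix.mul_add, Matrix.add_mul, Matrix.mul_smul, Matrix.smul_mul] at this
  simpa only [complexify, map_ofReal_mul] using this

lemma PosSemidef.complexify_toBlocks₁₁ {A B : Matrix (n ⊕ m) (n ⊕ m) ℝ}
    (h : (complexify A B).PosSemidef) : (complexify A.toBlocks₁₁ B.toBlocks₁₁).PosSemidef :=
  h.submatrix Sum.inl

lemma toBlocks₁₁_mul_fromBlocks_zero_mul_transpose {o R : Type*} [Fintype n] [Fintype o]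
    [CommSemiring R] (S : Matrix (l ⊕ m) (n ⊕ o) R) (P : Matrix n n R) (Q : Matrix o o R) :
    (S * fromBlocks P 0 0 Q * Sᵀ).toBlocks₁₁ =
      S.toBlocks₁₁ * P * S.toBlocks₁₁ᵀ + S.toBlocks₁₂ * Q * S.toBlocks₁₂ᵀ := by
  conv_lhs => rw [← fromBlocks_toBlocks S]
  simp [fromBlocks_transpose, fromBlocks_multiply]

end Matrix

lemma mul_J2_mul_transpose (M : Matrix (Fin 2) (Fin 2) ℝ) : M * J2 * Mᵀ = M.det • J2 := by
  ext i j
  fin_cases i <;> fin_cases j <;>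
    simp [J2, Matrix.mul_apply, Matrix.det_fin_two, Fin.sum_univ_two] <;> ring

lemma abs_le_of_posSemidef_complexify_J2 {ν ε : ℝ}
    (h : (complexify (ν • 1) (ε • J2)).PosSemidef) : |ε| ≤ ν := by
  have hν : 0 ≤ ν := by
    simpa [complexify, J2, zero_le_real] using h.diag_nonneg (i := 0)
  have hdet : (0 : ℂ) ≤ ((ν ^ 2 - ε ^ 2 : ℝ) : ℂ) := by
    convert h.det_nonneg using 1
    simp [complexify, det_fin_two, J2]
    linear_combination -(ε : ℂ) ^ 2 * I_mul_I
  exact abs_le_of_sq_le_sq (by linarith [zero_le_real.mp hdet]) hν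

lemma Λ4_transpose : Λ4ᵀ = Λ4 := by
  ext i j
  rcases i with i | i <;> rcases j with j | j <;> fin_cases i <;> fin_cases j <;> simp [Λ4, Z2]

lemma mul_Λ4_mul_mul_transpose (S X : Matrix (Fin 2 ⊕ Fin 2) (Fin 2 ⊕ Fin 2) ℝ) :
    S * Λ4 * X * (S * Λ4)ᵀ = S * (Λ4 * X * Λ4) * Sᵀ := by
  rw [transpose_mul, Λ4_transpose]
  simp only [Matrix.mul_assoc]

lemma Λ4_mul_Ω4_mul_Λ4 : Λ4 * Ω4 * Λ4 = fromBlocks (-J2) 0 0 J2 := by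
  have hZJZ : Z2 * J2 * Z2 = -J2 := by
    ext i j
    fin_cases i <;> fin_cases j <;> simp [J2, Z2, Matrix.mul_apply, Fin.sum_univ_two]
  simp [Λ4, Ω4, fromBlocks_multiply, hZJZ]

lemma toBlocks₁₁_mul_Λ4_mul_Ω4_mul_Λ4_mul_transpose
    (S : Matrix (Fin 2 ⊕ Fin 2) (Fin 2 ⊕ Fin 2) ℝ) :
    (S * (Λ4 * Ω4 * Λ4) * Sᵀ).toBlocks₁₁ = (S.toBlocks₁₂.det - S.toBlocks₁₁.det) • J2 := by
  rw [Λ4_mul_Ω4_mul_Λ4, toBlocks₁₁_mul_fromBlocks_zero_mul_transpose, Matrix.mul_neg,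
    Matrix.neg_mul, mul_J2_mul_transpose, mul_J2_mul_transpose, sub_smul, neg_add_eq_sub]

theorem heisenberg_epsilon_bound_general
    (V : Matrix (Fin 2 ⊕ Fin 2) (Fin 2 ⊕ Fin 2) ℝ) (hV : IsPhysCM V)
    (ν μ : ℝ) (S : Matrix (Fin 2 ⊕ Fin 2) (Fin 2 ⊕ Fin 2) ℝ)
    (hdiag : S * (Λ4 * V * Λ4) * Sᵀ =
      fromBlocks (ν • (1 : Matrix (Fin 2) (Fin 2) ℝ)) 0 0
        (μ • (1 : Matrix (Fin 2) (Fin 2) ℝ))) :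
    |(S.toBlocks₁₂).det - (S.toBlocks₁₁).det| ≤ ν := by
  have hPT := PosSemidef.complexify_congr (A := V) (B := Ω4) hV (S * Λ4)
  rw [mul_Λ4_mul_mul_transpose, mul_Λ4_mul_mul_transpose, hdiag] at hPT
  have hblock := hPT.complexify_toBlocks₁₁
  rw [toBlocks_fromBlocks₁₁, toBlocks₁₁_mul_Λ4_mul_Ω4_mul_Λ4_mul_transpose] at hblock
  exact abs_le_of_posSemidef_complexify_J2 hblock

/-- if `V` is a physical two-mode covariance matrix and
`S ∈ Sp(4,ℝ)` diagonalizes the partially transposed matrix,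
`S (Λ V Λ) Sᵀ = diag(ν, ν, μ, μ)`, then the blocks `W_a = S₁₁`, `W_b = S₁₂`
satisfy the Heisenberg constraint `|det W_b − det W_a| ≤ ν`. -/
theorem heisenberg_epsilon_bound
    (V : Matrix (Fin 2 ⊕ Fin 2) (Fin 2 ⊕ Fin 2) ℝ) (hV : IsPhysCM V)
    (ν μ : ℝ) (S : Matrix (Fin 2 ⊕ Fin 2) (Fin 2 ⊕ Fin 2) ℝ)
    (hS : S * Ω4 * Sᵀ = Ω4)
    (hdiag : S * (Λ4 * V * Λ4) * Sᵀ =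
      fromBlocks (ν • (1 : Matrix (Fin 2) (Fin 2) ℝ)) 0 0
        (μ • (1 : Matrix (Fin 2) (Fin 2) ℝ))) :
    |(S.toBlocks₁₂).det - (S.toBlocks₁₁).det| ≤ ν :=
  heisenberg_epsilon_bound_general V hV ν μ S hdiag
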